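/- arXiv:1504.03506 — 5 statements merged into one kernel-verified Lean document; each statement's English description precedes it below -/
import Mathlib

section
/- Let λ be a σ-finite measure, f ≥ 0 a measurable function with ∫ f dλ = 1, g a measurable function, q ≥ 1, ε > 0, and B a measurable set with λ(B) = M ∈ (0,∞) on which |g| ≥ ε. Then ∫ |g(x)|^q f(x)^{1−q} dλ(x) ≥ ε^q (M/2)^q. -/
/-!
Wherever `f < 2/M` on `B`, the integrand is at least `K = ε^q (2/M)^{1-q} = ε^q (M/2)^{q-1}`.
So `B` is covered by `{f ≥ 2/M}` and `{integrand ≥ K}`, and Markov's inequality on each gives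
`M ≤ M/2 + (∫ integrand) / K`, i.e. `∫ integrand ≥ K M/2 = ε^q (M/2)^q`.
-/

open MeasureTheory
open scoped ENNReal

namespace ENNReal

theorem rpow_le_rpow_of_nonpos {x y : ℝ≥0∞} {z : ℝ} (hxy : x ≤ y) (hz : z ≤ 0) :
    y ^ z ≤ x ^ z := by
  rw [← neg_neg z, rpow_neg x, rpow_neg y]
  exact ENNReal.inv_le_inv.mpr (rpow_le_rpow hxy (neg_nonneg.mpr hz))

theorem inv_rpow_one_sub_mul_self {m : ℝ≥0∞} (hm : m ≠ 0) (hm' : m ≠ ⊤) (q : ℝ) :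
    m⁻¹ ^ (1 - q) * m = m ^ q := by
  rw [inv_rpow, ← rpow_neg, neg_sub]
  nth_rw 2 [← rpow_one m]
  rw [← rpow_add _ _ hm hm', sub_add_cancel]

end ENNReal

section

variable {α : Type*} [MeasurableSpace α] {μ : Measure α}

theorem measure_le_lintegral_div_add_lintegral_div {f F : α → ℝ≥0∞}
    (hf : AEMeasurable f μ) (hF : AEMeasurable F μ) {c K : ℝ≥0∞}
    (hc : c ≠ 0) (hc' : c ≠ ⊤) (hK : K ≠ 0) (hK' : K ≠ ⊤) {B : Set α}
    (hB : ∀ x ∈ B, f x < c → K ≤ F x) :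
    μ B ≤ (∫⁻ x, f x ∂μ) / c + (∫⁻ x, F x ∂μ) / K := by
  have hcover : B ⊆ {x | c ≤ f x} ∪ {x | K ≤ F x} := fun x hx =>
    (le_or_gt c (f x)).imp id (hB x hx)
  calc μ B ≤ μ {x | c ≤ f x} + μ {x | K ≤ F x} :=
        (measure_mono hcover).trans (measure_union_le _ _)
    _ ≤ _ := add_le_add (meas_ge_le_lintegral_div hf hc hc')
        (meas_ge_le_lintegral_div hF hK hK')

end

theorem stmt_2_general {α : Type*} [MeasurableSpace α] (lam : Measure α)
    (f g : α → ℝ) (hfmeas : Measurable f)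
    (hfint : ∫⁻ x, ENNReal.ofReal (f x) ∂lam = 1)
    (hgmeas : Measurable g) (q : ℝ) (hq : 1 ≤ q) (ε : ℝ) (hε : 0 < ε)
    (M : ℝ) (hM : 0 < M) (B : Set α)
    (hBM : lam B = ENNReal.ofReal M)
    (hgB : ∀ x ∈ B, ε ≤ |g x|) :
    ENNReal.ofReal (ε ^ q * (M / 2) ^ q) ≤
      ∫⁻ x, (ENNReal.ofReal |g x|) ^ q * (ENNReal.ofReal (f x)) ^ (1 - q) ∂lam := by
  set m := ENNReal.ofReal (M / 2)
  have hm : m ≠ 0 := by simpa [m] using hM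
  have hm' : m ≠ ⊤ := ENNReal.ofReal_ne_top
  set K := ENNReal.ofReal ε ^ q * m⁻¹ ^ (1 - q)
  have hK : K ≠ 0 := mul_ne_zero
    (by simp [ENNReal.rpow_eq_zero_iff, hε, hq.trans_lt' one_pos])
    (by simp [ENNReal.rpow_eq_zero_iff, hm, hm'])
  have hK' : K ≠ ⊤ := ENNReal.mul_ne_top
    (ENNReal.rpow_ne_top_of_nonneg (by linarith) ENNReal.ofReal_ne_top)
    (ENNReal.rpow_ne_top_of_ne_zero (by simpa using hm') (by simpa using hm))
  have hbound : ∀ x ∈ B, ENNReal.ofReal (f x) < m⁻¹ →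
      K ≤ (ENNReal.ofReal |g x|) ^ q * (ENNReal.ofReal (f x)) ^ (1 - q) := fun x hx hfx =>
    mul_le_mul' (ENNReal.rpow_le_rpow (ENNReal.ofReal_le_ofReal (hgB x hx)) (by linarith))
      (ENNReal.rpow_le_rpow_of_nonpos hfx.le (by linarith))
  have hmarkov := measure_le_lintegral_div_add_lintegral_div (μ := lam)
    hfmeas.ennreal_ofReal.aemeasurable (by fun_prop) (ENNReal.inv_ne_zero.mpr hm')
    (ENNReal.inv_ne_top.mpr hm) hK hK' hbound
  have hM2 : ENNReal.ofReal M = m + m := by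
    rw [← ENNReal.ofReal_add (by positivity) (by positivity), add_halves]
  rw [hBM, hfint, one_div, inv_inv, hM2] at hmarkov
  have hmK :
      m * K ≤ ∫⁻ x, (ENNReal.ofReal |g x|) ^ q * (ENNReal.ofReal (f x)) ^ (1 - q) ∂lam :=
    (ENNReal.le_div_iff_mul_le (Or.inl hK) (Or.inl hK')).mp
      (ENNReal.le_of_add_le_add_left hm' hmarkov)
  calc ENNReal.ofReal (ε ^ q * (M / 2) ^ q) = ENNReal.ofReal ε ^ q * m ^ q := by
        rw [ENNReal.ofReal_mul (by positivity), ENNReal.ofReal_rpow_of_pos hε,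
          ENNReal.ofReal_rpow_of_pos (by positivity)]
    _ = m * K := by rw [← ENNReal.inv_rpow_one_sub_mul_self hm hm' q]; ring
    _ ≤ _ := hmK

/-- If `f` is a probability density w.r.t. a σ-finite measure `λ`, `g` is
measurable, `q ≥ 1`, and `|g| ≥ ε` on a measurable set `B` of finite positive measure `M`,
then `∫ |g|^q f^{1-q} dλ ≥ ε^q (M/2)^q`.  Here `f(x)^{1-q}` is interpreted in `[0,∞]`
(so it is `+∞` when `f x = 0`, `q > 1`). -/
theorem stmt_2 {α : Type*} [MeasurableSpace α] (lam : Measure α) [SigmaFinite lam]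
    (f g : α → ℝ) (hfmeas : Measurable f) (hf0 : ∀ x, 0 ≤ f x)
    (hfint : ∫⁻ x, ENNReal.ofReal (f x) ∂lam = 1)
    (hgmeas : Measurable g) (q : ℝ) (hq : 1 ≤ q) (ε : ℝ) (hε : 0 < ε)
    (M : ℝ) (hM : 0 < M) (B : Set α) (hB : MeasurableSet B)
    (hBM : lam B = ENNReal.ofReal M)
    (hgB : ∀ x ∈ B, ε ≤ |g x|) :
    ENNReal.ofReal (ε ^ q * (M / 2) ^ q) ≤
      ∫⁻ x, (ENNReal.ofReal |g x|) ^ q * (ENNReal.ofReal (f x)) ^ (1 - q) ∂lam :=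
  stmt_2_general lam f g hfmeas hfint hgmeas q hq ε hε M hM B hBM hgB
end

section
/- Let d ≥ 1 and let φ : ℝ^{2d} → ℝ^{2d} be the map φ(π₁,…,π_d,θ₁,…,θ_d) = (Σ_{j=1}^d π_j, Σ_{j=1}^d π_j θ_j, Σ_{j=1}^d π_j θ_j², …, Σ_{j=1}^d π_j θ_j^{2d−1}). Then the Jacobian determinant of φ at (π₁,…,π_d,θ₁,…,θ_d) equals (−1)^{d(d−1)/2} · π₁⋯π_d · ∏_{1≤j<k≤d} (θ_j − θ_k)^4. -/
open Finset

/-!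
Split `(π, θ) ∈ ℝ^{2d}` into weights and nodes. The column of the Jacobian belonging to `π_a` is
`(θ_a^k)_k` and the one belonging to `θ_a` is `π_a (k θ_a^{k-1})_k`, so pulling the weights out
leaves the confluent Vandermonde matrix of `θ`, each node taken with multiplicity two.

Its determinant is the limit of divided differences: for nodes `x` and `y`, the Vandermonde
matrix of `(x, y)` factors as a matrix of divided differences `(y^k - x^k)/(y - x)` times a block
triangular matrix of determinant `∏ (y_a - x_a)`. Taking `y = x + ε`, cancelling `ε^d` and letting
`ε → 0` gives `Δ(x)² ∏_{a ≠ b} (x_b - x_a) = (-1)^{d(d-1)/2} Δ(x)⁴`, with `Δ` the Vandermonde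
product.
-/

theorem Finset.prod_filter_fst_lt_snd {ι M : Type*} [CommMonoid M] [LinearOrder ι] [Fintype ι]
    [LocallyFiniteOrderTop ι] (f : ι → ι → M) :
    ∏ p ∈ univ.filter (fun p : ι × ι => p.1 < p.2), f p.1 p.2 = ∏ i, ∏ j ∈ Ioi i, f i j := by
  rw [prod_filter, ← univ_product_univ, prod_product]
  refine prod_congr rfl fun i _ => ?_
  rw [← prod_filter]
  congr 1
  ext
  simp

namespace Fin

theorem prod_prod_Ioi_add {M : Type*} [CommMonoid M] {m n : ℕ}
    (f : Fin (m + n) → Fin (m + n) → M) :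
    ∏ i, ∏ j ∈ Ioi i, f i j =
      (∏ a : Fin m, ∏ b ∈ Ioi a, f (castAdd n a) (castAdd n b)) *
        (∏ a : Fin n, ∏ b ∈ Ioi a, f (natAdd m a) (natAdd m b)) *
          ∏ a : Fin m, ∏ b : Fin n, f (castAdd n a) (natAdd m b) := by
  have hIoi {k : ℕ} (i : Fin k) (g : Fin k → M) :
      ∏ j ∈ Ioi i, g j = ∏ j, if i < j then g j else 1 := by
    rw [← prod_filter]
    congr 1
    ext
    simp
  have hlr (a : Fin m) (b : Fin n) : castAdd n a < natAdd m b := by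
    simp only [lt_def]
    grind
  have hrl (a : Fin n) (b : Fin m) : ¬natAdd m a < castAdd n b := by
    simp only [lt_def]
    grind
  simp only [hIoi, prod_univ_add, (strictMono_castAdd n).lt_iff_lt, natAdd_lt_natAdd_iff, hlr,
    hrl, if_true, if_false, prod_const_one, mul_one, prod_mul_distrib]
  ac_rfl

theorem prod_prod_compl_sub {R : Type*} [CommRing R] {d : ℕ} (x : Fin d → R) :
    ∏ a, ∏ b ∈ {a}ᶜ, (x b - x a) =
      (-1) ^ (d * (d - 1) / 2) * (∏ a, ∏ b ∈ Ioi a, (x b - x a)) ^ 2 := by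
  have hsign (a : Fin d) :
      ∏ b ∈ Iio a, (x b - x a) = (-1) ^ (a : ℕ) * ∏ b ∈ Iio a, (x a - x b) := by
    rw [← card_Iio a, ← prod_neg]
    simp only [neg_sub]
  have hIio : ∏ a, ∏ b ∈ Iio a, (x b - x a) =
      (-1) ^ (d * (d - 1) / 2) * ∏ a, ∏ b ∈ Ioi a, (x b - x a) := by
    rw [prod_congr rfl fun a _ => hsign a, prod_mul_distrib, prod_pow_eq_pow_sum,
      sum_univ_eq_sum_range (fun i => i) d, sum_range_id]
    congr 1
    exact prod_comm' fun a b => by simp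
  simp_rw [← Ioi_disjUnion_Iio, prod_disjUnion, prod_mul_distrib, hIio]
  ring

end Fin

namespace Matrix

variable {R : Type*} [CommRing R] {d : ℕ}

/-- The divided differences `(y_a^k - x_a^k) / (y_a - x_a)` of the last `d` columns are written as
geometric sums, so that they still make sense (as derivatives) when `y_a = x_a`. -/
def divDiffVandermonde (x y : Fin d → R) : Matrix (Fin (d + d)) (Fin (d + d)) R :=
  of fun k => Fin.append (fun a => x a ^ (k : ℕ))
    fun a => ∑ m ∈ range k, y a ^ m * x a ^ ((k : ℕ) - 1 - m)

def confluentVandermonde (x : Fin d → R) : Matrix (Fin (d + d)) (Fin (d + d)) R :=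
  of fun k => Fin.append (fun a => x a ^ (k : ℕ)) fun a => (k : R) * x a ^ ((k : ℕ) - 1)

theorem divDiffVandermonde_self (x : Fin d → R) :
    divDiffVandermonde x x = confluentVandermonde x := by
  ext k i
  refine Fin.addCases (fun a => ?_) (fun a => ?_) i <;>
    simp [divDiffVandermonde, confluentVandermonde, geom_sum₂_self]

theorem transpose_vandermonde_append (x y : Fin d → R) :
    (vandermonde (Fin.append x y))ᵀ = divDiffVandermonde x y *
      reindex finSumFinEquiv finSumFinEquiv (fromBlocks 1 1 0 (diagonal (y - x))) := by
  ext k i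
  refine Fin.addCases (fun a => ?_) (fun a => ?_) i <;>
    simp [-Fin.natAdd_eq_addNat, divDiffVandermonde, mul_apply, Fin.sum_univ_add, one_apply,
      diagonal_apply, geom_sum₂_mul]

theorem det_divDiffVandermonde_mul (x y : Fin d → R) :
    det (divDiffVandermonde x y) * ∏ a, (y a - x a) =
      (∏ a, ∏ b ∈ Ioi a, (x b - x a)) * (∏ a, ∏ b ∈ Ioi a, (y b - y a)) *
        ∏ a, ∏ b, (y b - x a) := by
  have h := congrArg det (transpose_vandermonde_append x y)
  rw [det_transpose, det_vandermonde, Fin.prod_prod_Ioi_add, det_mul, det_reindex_self,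
    det_fromBlocks_zero₂₁, det_one, one_mul, det_diagonal] at h
  simpa [-Fin.natAdd_eq_addNat] using h.symm

theorem det_confluentVandermonde (x : Fin d → ℝ) :
    det (confluentVandermonde x) =
      (-1) ^ (d * (d - 1) / 2) * (∏ a, ∏ b ∈ Ioi a, (x b - x a)) ^ 4 := by
  set Δ := ∏ a, ∏ b ∈ Ioi a, (x b - x a)
  set g : ℝ → ℝ := fun ε => Δ ^ 2 * ∏ a, ∏ b ∈ {a}ᶜ, (x b + ε - x a)
  have hshift (ε : ℝ) (hε : ε ≠ 0) : det (divDiffVandermonde x (x · + ε)) = g ε := by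
    have h := det_divDiffVandermonde_mul x (x · + ε)
    simp only [fun a => Fintype.prod_eq_mul_prod_compl a (fun b => x b + ε - x a),
      add_sub_cancel_left, add_sub_add_right_eq_sub, prod_mul_distrib, prod_const, card_univ,
      Fintype.card_fin] at h
    refine mul_right_cancel₀ (pow_ne_zero d hε) ?_
    rw [h]
    ring
  have hcont : Continuous fun ε => det (divDiffVandermonde x (x · + ε)) := by
    refine Continuous.matrix_det (continuous_matrix fun k i => ?_)
    refine Fin.addCases (fun a => ?_) (fun a => ?_) i <;>
      simp only [divDiffVandermonde, of_apply, Fin.append_left, Fin.append_right] <;> fun_prop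
  have hzero := congrFun (hcont.ext_on (dense_compl_singleton 0) (by fun_prop) hshift) 0
  simp only [add_zero, divDiffVandermonde_self, Fin.prod_prod_compl_sub, g] at hzero
  rw [hzero]
  ring

end Matrix

def momentMap (d : ℕ) (v : Fin (d + d) → ℝ) (k : Fin (d + d)) : ℝ :=
  ∑ j : Fin d, v (Fin.castAdd d j) * v (Fin.natAdd d j) ^ (k : ℕ)

theorem fderiv_momentMap_apply_single (d : ℕ) (v : Fin (d + d) → ℝ) (i k : Fin (d + d)) :
    fderiv ℝ (momentMap d) v (Pi.single i 1) k =
      Fin.append (fun _ => 1) (fun a => v (Fin.castAdd d a)) i *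
        Matrix.confluentVandermonde (fun a => v (Fin.natAdd d a)) k i := by
  have h (k : Fin (d + d)) :
      HasFDerivAt (fun w => momentMap d w k) (_ : (Fin (d + d) → ℝ) →L[ℝ] ℝ) v :=
    HasFDerivAt.fun_sum fun j _ => (hasFDerivAt_apply (Fin.castAdd d j) v).fun_mul
      ((hasFDerivAt_apply (Fin.natAdd d j) v).pow (k : ℕ))
  have hne (a b : Fin d) : Fin.castAdd d a ≠ Fin.natAdd d b := by
    simp only [ne_eq, Fin.ext_iff, Fin.val_castAdd, Fin.val_natAdd]
    omega
  rw [(hasFDerivAt_pi.2 h).fderiv]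
  refine Fin.addCases (fun a => ?_) (fun a => ?_) i <;>
    simp [-Fin.natAdd_eq_addNat, Matrix.confluentVandermonde, Pi.single_apply, hne]

theorem stmt_7_general (d : ℕ)
    (φ : (Fin (d + d) → ℝ) → (Fin (d + d) → ℝ))
    (hφ : ∀ v k, φ v k =
      ∑ j : Fin d, v (finSumFinEquiv (Sum.inl j)) * v (finSumFinEquiv (Sum.inr j)) ^ (k : ℕ))
    (v : Fin (d + d) → ℝ) :
    Matrix.det (Matrix.of fun k i : Fin (d + d) =>
        fderiv ℝ φ v (Pi.single i 1) k) =
      (-1 : ℝ) ^ (d * (d - 1) / 2) *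
        (∏ j : Fin d, v (finSumFinEquiv (Sum.inl j))) *
        ∏ p ∈ univ.filter (fun p : Fin d × Fin d => p.1 < p.2),
          (v (finSumFinEquiv (Sum.inr p.1)) - v (finSumFinEquiv (Sum.inr p.2))) ^ 4 := by
  obtain rfl : φ = momentMap d := funext fun v => funext (hφ v)
  simp only [fderiv_momentMap_apply_single, Matrix.det_mul_row, Matrix.det_confluentVandermonde,
    Fin.prod_univ_add, Fin.append_left, Fin.append_right, prod_const_one, one_mul,
    finSumFinEquiv_apply_left, finSumFinEquiv_apply_right]
  rw [prod_filter_fst_lt_snd fun i j => (v (Fin.natAdd d i) - v (Fin.natAdd d j)) ^ 4]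
  have hflip : (∏ a, ∏ b ∈ Ioi a, (v (Fin.natAdd d b) - v (Fin.natAdd d a))) ^ 4 =
      ∏ a, ∏ b ∈ Ioi a, (v (Fin.natAdd d a) - v (Fin.natAdd d b)) ^ 4 := by
    simp only [← prod_pow]
    exact prod_congr rfl fun _ _ => prod_congr rfl fun _ _ => by ring
  rw [hflip]
  ring

/-- Jacobian of the moment map: the Jacobian determinant of
`φ(π₁,…,π_d,θ₁,…,θ_d) = (Σπ_j, Σπ_jθ_j, …, Σπ_jθ_j^{2d-1})` equals
`(−1)^{d(d−1)/2} π₁⋯π_d ∏_{j<k} (θ_j − θ_k)^4`. -/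
theorem stmt_7 (d : ℕ) (hd : 1 ≤ d)
    (φ : (Fin (d + d) → ℝ) → (Fin (d + d) → ℝ))
    (hφ : ∀ v k, φ v k =
      ∑ j : Fin d, v (finSumFinEquiv (Sum.inl j)) * v (finSumFinEquiv (Sum.inr j)) ^ (k : ℕ))
    (v : Fin (d + d) → ℝ) :
    Matrix.det (Matrix.of fun k i : Fin (d + d) =>
        fderiv ℝ φ v (Pi.single i 1) k) =
      (-1 : ℝ) ^ (d * (d - 1) / 2) *
        (∏ j : Fin d, v (finSumFinEquiv (Sum.inl j))) *
        ∏ p ∈ univ.filter (fun p : Fin d × Fin d => p.1 < p.2),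
          (v (finSumFinEquiv (Sum.inr p.1)) - v (finSumFinEquiv (Sum.inr p.2))) ^ 4 :=
  stmt_7_general d φ hφ v
end

section
/- Let d ≥ 1 and let φ : ℝ^{2d} → ℝ^{2d} be the map φ(π₁,…,π_d,h₁,…,h_d) = (Σ_{j=1}^d π_j, Σ_{j=1}^d π_j h_j, Σ_{j=1}^d π_j h_j², …, Σ_{j=1}^d π_j h_j^{2d−1}). Then φ is injective on the set {(π₁,…,π_d,h₁,…,h_d) : π_i > 0 for all i, and h₁ < h₂ < … < h_d}. -/
/-!
Record `(π, h)` as the finitely supported weight function `x ↦ Σ_{h j = x} π j`. If two such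
records have equal power sums up to degree `2d - 1`, the difference of their weight functions is
supported on at most `2d` points and annihilates every polynomial of degree `< 2d`; testing it
against the Lagrange basis of that support shows it is zero. Since the weights are nonzero, the
support of the weight function is the set of support points, which for strictly increasing `h`
determines `h`, and then the weight function determines `π`.
-/

open Finset Polynomial

section Moments

variable {F : Type*} [Field F]

theorem sum_mul_eval_eq_zero_of_sum_mul_pow_eq_zero {S : Finset F} {c : F → F} {n : ℕ}
    (hc : ∀ k < n, ∑ x ∈ S, c x * x ^ k = 0) {p : F[X]} (hp : p.natDegree < n) :
    ∑ x ∈ S, c x * p.eval x = 0 := by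
  simp_rw [eval_eq_sum_range' hp, mul_sum]
  rw [sum_comm]
  refine sum_eq_zero fun k hk => ?_
  rw [← mul_zero (p.coeff k), ← hc k (mem_range.mp hk), mul_sum]
  exact sum_congr rfl fun x _ => by ring

theorem eq_zero_of_sum_mul_pow_eq_zero [DecidableEq F] {S : Finset F} {c : F → F}
    (hc : ∀ k < #S, ∑ x ∈ S, c x * x ^ k = 0) {x₀ : F} (hx₀ : x₀ ∈ S) : c x₀ = 0 := by
  have hinj : Set.InjOn id (S : Set F) := Function.injective_id.injOn
  have hdeg : (Lagrange.basis S id x₀).natDegree < #S := by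
    rw [Lagrange.natDegree_basis hinj hx₀]
    exact Nat.sub_lt (card_pos.mpr ⟨x₀, hx₀⟩) one_pos
  have hself : (Lagrange.basis S id x₀).eval x₀ = 1 := Lagrange.eval_basis_self hinj hx₀
  have hsum := sum_mul_eval_eq_zero_of_sum_mul_pow_eq_zero hc hdeg
  rwa [sum_eq_single_of_mem x₀ hx₀ fun x hx hne => by
      rw [show (Lagrange.basis S id x₀).eval x = 0 from
          Lagrange.eval_basis_of_ne (v := id) hne.symm hx,
        mul_zero], hself, mul_one] at hsum

end Moments

section AtomWeight

variable {F ι ι' : Type*} [Field F] [DecidableEq F] [Fintype ι] [Fintype ι']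

def atomWeight (π h : ι → F) (x : F) : F :=
  ∑ j, if h j = x then π j else 0

theorem sum_atomWeight_mul {π h : ι → F} {S : Finset F} (hS : ∀ j, h j ∈ S) (f : F → F) :
    ∑ x ∈ S, atomWeight π h x * f x = ∑ j, π j * f (h j) := by
  simp_rw [atomWeight, sum_mul, ite_mul, zero_mul]
  rw [sum_comm]
  exact sum_congr rfl fun j _ => by rw [sum_ite_eq S (h j) (fun x => π j * f x), if_pos (hS j)]

theorem atomWeight_apply_self (π : ι → F) {h : ι → F} (hh : Function.Injective h) (j : ι) :
    atomWeight π h (h j) = π j := by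
  rw [atomWeight, sum_eq_single j (fun i _ hij => if_neg (hh.ne hij)) (absurd (mem_univ j)),
    if_pos rfl]

theorem atomWeight_eq_zero_of_notMem_range (π : ι → F) {h : ι → F} {x : F}
    (hx : x ∉ Set.range h) : atomWeight π h x = 0 :=
  sum_eq_zero fun j _ => if_neg fun hj => hx ⟨j, hj⟩

theorem atomWeight_ne_zero_iff {π h : ι → F} (hπ : ∀ j, π j ≠ 0) (hh : Function.Injective h)
    {x : F} : atomWeight π h x ≠ 0 ↔ x ∈ Set.range h := by
  refine ⟨fun hx => not_not.mp fun hr => hx (atomWeight_eq_zero_of_notMem_range π hr), ?_⟩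
  rintro ⟨j, rfl⟩
  rw [atomWeight_apply_self π hh]
  exact hπ j

theorem atomWeight_eq_of_sum_mul_pow_eq {π h : ι → F} {π' h' : ι' → F} {n : ℕ}
    (hn : Fintype.card ι + Fintype.card ι' ≤ n)
    (hmom : ∀ k < n, ∑ j, π j * h j ^ k = ∑ j, π' j * h' j ^ k) :
    atomWeight π h = atomWeight π' h' := by
  set S := univ.image h ∪ univ.image h'
  have hS : ∀ j, h j ∈ S := fun j => mem_union_left _ (mem_image_of_mem h (mem_univ j))
  have hS' : ∀ j, h' j ∈ S := fun j => mem_union_right _ (mem_image_of_mem h' (mem_univ j))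
  have hcard : #S ≤ n :=
    (card_union_le _ _).trans <| (add_le_add card_image_le card_image_le).trans hn
  have hzero : ∀ x ∈ S, atomWeight π h x - atomWeight π' h' x = 0 := by
    refine fun x hx => eq_zero_of_sum_mul_pow_eq_zero
      (c := fun x => atomWeight π h x - atomWeight π' h' x) (fun k hk => ?_) hx
    simp_rw [sub_mul, sum_sub_distrib, sum_atomWeight_mul hS, sum_atomWeight_mul hS']
    exact sub_eq_zero.mpr (hmom k (hk.trans_le hcard))
  funext x
  by_cases hx : x ∈ S
  · exact sub_eq_zero.mp (hzero x hx)
  · rw [atomWeight_eq_zero_of_notMem_range π fun ⟨j, hj⟩ => hx (hj ▸ hS j),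
      atomWeight_eq_zero_of_notMem_range π' fun ⟨j, hj⟩ => hx (hj ▸ hS' j)]

end AtomWeight

theorem stmt_8_general (d : ℕ) :
    Set.InjOn
      (fun p : (Fin d → ℝ) × (Fin d → ℝ) =>
        fun k : Fin (2 * d) => ∑ j, p.1 j * p.2 j ^ (k : ℕ))
      {p : (Fin d → ℝ) × (Fin d → ℝ) | (∀ i, 0 < p.1 i) ∧ StrictMono p.2} := by
  rintro ⟨π, h⟩ ⟨hπ, hh⟩ ⟨π', h'⟩ ⟨hπ', hh'⟩ heq
  have hw : atomWeight π h = atomWeight π' h' :=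
    atomWeight_eq_of_sum_mul_pow_eq (n := 2 * d) (by simp [two_mul])
      fun k hk => congrFun heq ⟨k, hk⟩
  have hrange : Set.range h = Set.range h' := by
    ext x
    rw [← atomWeight_ne_zero_iff (fun j => (hπ j).ne') hh.injective, hw,
      atomWeight_ne_zero_iff (fun j => (hπ' j).ne') hh'.injective]
  obtain rfl : h = h' := (hh.range_inj hh').mp hrange
  refine Prod.ext (funext fun j => ?_) rfl
  change π j = π' j
  rw [← atomWeight_apply_self π hh.injective j, hw, atomWeight_apply_self π' hh.injective]

/-- the moment map `φ(π,h) = (Σπ_j h_j^k)_{k=0,…,2d-1}` is injective on the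
set of positive weights and strictly increasing support points. -/
theorem stmt_8 (d : ℕ) (hd : 1 ≤ d) :
    Set.InjOn
      (fun p : (Fin d → ℝ) × (Fin d → ℝ) =>
        fun k : Fin (2 * d) => ∑ j, p.1 j * p.2 j ^ (k : ℕ))
      {p : (Fin d → ℝ) × (Fin d → ℝ) | (∀ i, 0 < p.1 i) ∧ StrictMono p.2} :=
  stmt_8_general d
end

section
/- For each n and each u ∈ ℝ let f_{n,u} be a probability density with respect to a σ-finite measure λ_n, with associated probability measure P_{n,u}, and assume f_{n,0} > 0 λ_n-a.e. Fix u ∈ ℝ and Γ > 0. Suppose there are statistics Z_n (measurable functions on the sample space) such that, with X distributed according to P_{n,0}: (a) the law of Z_n(X) converges weakly to the Gaussian law N(0,Γ); and (b) ln( f_{n,u}(X)/f_{n,0}(X) ) − u Z_n(X) + (u²/2)Γ converges to 0 in P_{n,0}-probability. Then liminf_{n→∞} inf { P_{n,u}(A) : A measurable with P_{n,0}(A) ≥ 3/4 } ≥ (1/4) e^{−u²Γ/2}. -/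
/-!
Fix `ε > 0` and put `c = exp (-u²Γ/2 - 2ε)`. On `{f_{n,u} ≥ c f_{n,0}}` the measure `P_{n,u}`
dominates `c P_{n,0}`. Off this set, outside the event where the expansion (b) is off by `ε`,
either `u Z_n ≤ -ε` or `f_{n,u} = 0`; in the latter case the junk value `log 0 = 0` places
`u Z_n` within `ε` of `u²Γ/2`. By the portmanteau theorem the `P_{n,0}`-probability of these
closed events for `u Z_n` is asymptotically at most their `N(0, u²Γ)`-probability, which is
`1/2 + O(ε)`. Hence `P_{n,u}(A) ≥ c (3/4 - 1/2 - O(ε))` eventually, and we let `ε → 0`.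
-/

open MeasureTheory Filter
open scoped ENNReal

open ProbabilityTheory Real Set
open scoped NNReal Topology BoundedContinuousFunction

lemma gaussianReal_Iic_zero {v : ℝ≥0} (hv : v ≠ 0) : gaussianReal 0 v (Iic 0) = 2⁻¹ := by
  have := nullSingletonClass_gaussianReal (μ := 0) hv
  have hsymm : gaussianReal 0 v (Iic 0) = gaussianReal 0 v (Ioi 0) :=
    calc gaussianReal 0 v (Iic 0) = (gaussianReal 0 v).map (fun x ↦ -x) (Iic 0) := by
          rw [gaussianReal_map_neg, neg_zero]
      _ = gaussianReal 0 v (Ici 0) := by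
          rw [Measure.map_apply measurable_neg measurableSet_Iic]; congr 1; ext x; simp
      _ = gaussianReal 0 v (Ioi 0) := measure_congr Ioi_ae_eq_Ici.symm
  have hsum := measure_add_measure_compl (μ := gaussianReal 0 v) (measurableSet_Iic (a := 0))
  rw [compl_Iic, ← hsymm, measure_univ, ← two_mul] at hsum
  exact ENNReal.eq_inv_of_mul_eq_one_left (by rwa [mul_comm])

lemma gaussianReal_Icc_le (μ : ℝ) {v : ℝ≥0} (hv : v ≠ 0) (a b : ℝ) :
    gaussianReal μ v (Icc a b) ≤ ENNReal.ofReal ((b - a) / √(2 * π * v)) := by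
  have hpdf (x : ℝ) : gaussianPDF μ v x ≤ ENNReal.ofReal (√(2 * π * v))⁻¹ := by
    refine ENNReal.ofReal_le_ofReal ?_
    rw [gaussianPDFReal]
    refine mul_le_of_le_one_right (by positivity) (exp_le_one_iff.mpr ?_)
    exact div_nonpos_of_nonpos_of_nonneg (neg_nonpos.mpr (sq_nonneg _)) (by positivity)
  calc gaussianReal μ v (Icc a b) = ∫⁻ x in Icc a b, gaussianPDF μ v x :=
        gaussianReal_apply μ hv _
    _ ≤ ∫⁻ _ in Icc a b, ENNReal.ofReal (√(2 * π * v))⁻¹ := lintegral_mono hpdf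
    _ = ENNReal.ofReal ((b - a) / √(2 * π * v)) := by
      rw [setLIntegral_const, Real.volume_Icc, ← ENNReal.ofReal_mul (by positivity), mul_comm,
        div_eq_mul_inv]

theorem limsup_measure_preimage_le_of_tendsto_integral {ι Ω : Type*} {L : Filter ι}
    [MeasurableSpace Ω] [TopologicalSpace Ω] [OpensMeasurableSpace Ω]
    [HasOuterApproxClosed Ω] {α : ι → Type*} [∀ i, MeasurableSpace (α i)]
    (P : ∀ i, Measure (α i))
    [∀ i, IsProbabilityMeasure (P i)] {X : ∀ i, α i → Ω} (hX : ∀ i, Measurable (X i))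
    (ν : Measure Ω) [IsProbabilityMeasure ν]
    (h : ∀ φ : Ω →ᵇ ℝ, Tendsto (fun i ↦ ∫ x, φ (X i x) ∂P i) L (𝓝 (∫ z, φ z ∂ν)))
    {F : Set Ω} (hF : IsClosed F) :
    L.limsup (fun i ↦ P i (X i ⁻¹' F)) ≤ ν F := by
  let law (i : ι) : ProbabilityMeasure Ω :=
    ⟨(P i).map (X i), Measure.isProbabilityMeasure_map (hX i).aemeasurable⟩
  have hlaw : Tendsto law L (𝓝 ⟨ν, inferInstance⟩) := by
    refine ProbabilityMeasure.tendsto_iff_forall_integral_tendsto.mpr fun φ ↦ ?_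
    simpa only [law, ProbabilityMeasure.coe_mk,
      integral_map (hX _).aemeasurable φ.continuous.aestronglyMeasurable] using h φ
  simpa only [law, ProbabilityMeasure.coe_mk, Measure.map_apply (hX _) hF.measurableSet]
    using ProbabilityMeasure.limsup_measure_closed_le_of_tendsto hlaw hF

section WithDensity

variable {β : Type*} [MeasurableSpace β] {lam : Measure β} {f g : β → ℝ}

lemma ae_pos_withDensity_ofReal (hf : Measurable f) :
    ∀ᵐ x ∂lam.withDensity (fun x ↦ ENNReal.ofReal (f x)), 0 < f x :=
  (ae_withDensity_iff hf.ennreal_ofReal).mpr <| ae_of_all _ fun _ hx ↦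
    ENNReal.ofReal_pos.mp (pos_iff_ne_zero.mpr hx)

lemma ofReal_mul_withDensity_inter_le {c : ℝ} (hc : 0 ≤ c) (hf : Measurable f)
    (hg : Measurable g) {A : Set β} (hA : MeasurableSet A) :
    ENNReal.ofReal c *
        lam.withDensity (fun x ↦ ENNReal.ofReal (f x)) (A ∩ {x | c * f x ≤ g x}) ≤
      lam.withDensity (fun x ↦ ENNReal.ofReal (g x)) A := by
  have hG : MeasurableSet {x | c * f x ≤ g x} := measurableSet_le (hf.const_mul c) hg
  rw [withDensity_apply _ (hA.inter hG), withDensity_apply _ hA,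
    ← lintegral_const_mul _ hf.ennreal_ofReal]
  calc ∫⁻ x in A ∩ {x | c * f x ≤ g x}, ENNReal.ofReal c * ENNReal.ofReal (f x) ∂lam
      ≤ ∫⁻ x in A ∩ {x | c * f x ≤ g x}, ENNReal.ofReal (g x) ∂lam :=
        setLIntegral_mono hg.ennreal_ofReal fun x hx ↦ by
          rw [← ENNReal.ofReal_mul hc]; exact ENNReal.ofReal_le_ofReal hx.2
    _ ≤ ∫⁻ x in A, ENNReal.ofReal (g x) ∂lam := lintegral_mono_set inter_subset_left

lemma mem_Iic_union_Icc_of_lt_exp_mul {a b w m ε : ℝ} (ha : 0 < a) (hb : 0 ≤ b)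
    (hlt : b < exp (-m - 2 * ε) * a) (hlog : |log (b / a) - w + m| < ε) :
    w ∈ Iic (-ε) ∪ Icc (m - ε) (m + ε) := by
  obtain ⟨hlog₁, hlog₂⟩ := abs_lt.mp hlog
  rcases hb.eq_or_lt with rfl | hb
  -- `log (0 / a)` is the junk value `0`, which pins `w` to within `ε` of `m`.
  · rw [zero_div, log_zero] at hlog₁ hlog₂
    exact Or.inr ⟨by linarith, by linarith⟩
  · have : log (b / a) < -m - 2 * ε := by
      rw [← log_exp (-m - 2 * ε)]
      exact log_lt_log (div_pos hb ha) ((div_lt_iff₀ ha).mpr hlt)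
    exact Or.inl (by simp only [mem_Iic]; linarith)

lemma ofReal_exp_mul_tsub_le_withDensity (hf : Measurable f) (hg : Measurable g)
    (hg₀ : ∀ x, 0 ≤ g x) (w : β → ℝ) (m ε : ℝ) {A : Set β} (hA : MeasurableSet A) :
    ENNReal.ofReal (exp (-m - 2 * ε)) *
      (lam.withDensity (fun x ↦ ENNReal.ofReal (f x)) A -
        (lam.withDensity (fun x ↦ ENNReal.ofReal (f x)) {x | ε ≤ |log (g x / f x) - w x + m|} +
          lam.withDensity (fun x ↦ ENNReal.ofReal (f x))
            (w ⁻¹' (Iic (-ε) ∪ Icc (m - ε) (m + ε)))))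
      ≤ lam.withDensity (fun x ↦ ENNReal.ofReal (g x)) A := by
  set P := lam.withDensity (fun x ↦ ENNReal.ofReal (f x))
  set G := {x | exp (-m - 2 * ε) * f x ≤ g x}
  set S := {x | ε ≤ |log (g x / f x) - w x + m|}
  set W := w ⁻¹' (Iic (-ε) ∪ Icc (m - ε) (m + ε))
  have hcover : A ≤ᵐ[P] ((A ∩ G ∪ S) ∪ W : Set β) := by
    filter_upwards [ae_pos_withDensity_ofReal hf] with x hfx hxA
    by_cases hxG : x ∈ G
    · exact Or.inl (Or.inl ⟨hxA, hxG⟩)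
    by_cases hxS : x ∈ S
    · exact Or.inl (Or.inr hxS)
    exact Or.inr (mem_Iic_union_Icc_of_lt_exp_mul hfx (hg₀ x) (not_le.mp hxG) (not_le.mp hxS))
  have hPA : P A ≤ P (A ∩ G) + (P S + P W) := by
    calc P A ≤ P ((A ∩ G ∪ S) ∪ W) := measure_mono_ae hcover
      _ ≤ P (A ∩ G ∪ S) + P W := measure_union_le _ _
      _ ≤ P (A ∩ G) + P S + P W := by gcongr; exact measure_union_le _ _
      _ = _ := add_assoc _ _ _
  calc ENNReal.ofReal (exp (-m - 2 * ε)) * (P A - (P S + P W))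
      ≤ ENNReal.ofReal (exp (-m - 2 * ε)) * P (A ∩ G) := by
        gcongr; exact tsub_le_iff_right.mpr hPA
    _ ≤ _ := ofReal_mul_withDensity_inter_le (exp_pos _).le hf hg hA

end WithDensity

lemma gaussianReal_Iic_union_Icc_le {v : ℝ≥0} (hv : v ≠ 0) {m ε : ℝ} (hε : 0 ≤ ε) :
    gaussianReal 0 v (Iic (-ε) ∪ Icc (m - ε) (m + ε))
      ≤ ENNReal.ofReal (1 / 2 + 2 * ε / √(2 * π * v)) := by
  have hIic : gaussianReal 0 v (Iic (-ε)) ≤ ENNReal.ofReal (1 / 2) := by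
    rw [one_div, ENNReal.ofReal_inv_of_pos two_pos, ENNReal.ofReal_ofNat,
      ← gaussianReal_Iic_zero hv]
    exact measure_mono (Iic_subset_Iic.mpr (neg_nonpos.mpr hε))
  calc gaussianReal 0 v (Iic (-ε) ∪ Icc (m - ε) (m + ε))
      ≤ gaussianReal 0 v (Iic (-ε)) + gaussianReal 0 v (Icc (m - ε) (m + ε)) :=
        measure_union_le _ _
    _ ≤ ENNReal.ofReal (1 / 2) + ENNReal.ofReal (2 * ε / √(2 * π * v)) := by
        rw [← show m + ε - (m - ε) = 2 * ε by ring]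
        exact add_le_add hIic (gaussianReal_Icc_le 0 hv _ _)
    _ = _ := (ENNReal.ofReal_add (by norm_num) (by positivity)).symm

lemma ofReal_le_liminf_sInf_withDensity {ι : Type*} {L : Filter ι} {α : ι → Type*}
    [∀ i, MeasurableSpace (α i)] {lam : ∀ i, Measure (α i)} {f g w : ∀ i, α i → ℝ}
    (hf : ∀ i, Measurable (f i)) (hg : ∀ i, Measurable (g i)) (hg₀ : ∀ i x, 0 ≤ g i x)
    {p m ε b : ℝ} (hε : 0 < ε) (hb : 0 ≤ b)
    (hS : Tendsto (fun i ↦ (lam i).withDensity (fun x ↦ ENNReal.ofReal (f i x))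
      {x | ε ≤ |log (g i x / f i x) - w i x + m|}) L (𝓝 0))
    (hW : L.limsup (fun i ↦ (lam i).withDensity (fun x ↦ ENNReal.ofReal (f i x))
      (w i ⁻¹' (Iic (-ε) ∪ Icc (m - ε) (m + ε)))) < ENNReal.ofReal b) :
    ENNReal.ofReal (exp (-m - 2 * ε) * (p - (ε + b))) ≤
      L.liminf fun i ↦ sInf {r : ℝ≥0∞ | ∃ A : Set (α i), MeasurableSet A ∧
        ENNReal.ofReal p ≤ (lam i).withDensity (fun x ↦ ENNReal.ofReal (f i x)) A ∧
        r = (lam i).withDensity (fun x ↦ ENNReal.ofReal (g i x)) A} := by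
  refine le_liminf_of_le (by isBoundedDefault) ?_
  filter_upwards [hS.eventually_lt_const (ENNReal.ofReal_pos.mpr hε),
    eventually_lt_of_limsup_lt hW] with i hSi hWi
  refine le_sInf ?_
  rintro _ ⟨A, hA, hpA, rfl⟩
  refine le_trans ?_ (ofReal_exp_mul_tsub_le_withDensity (hf i) (hg i) (hg₀ i) (w i) m ε hA)
  rw [ENNReal.ofReal_mul (exp_pos _).le, ENNReal.ofReal_sub _ (by positivity),
    ENNReal.ofReal_add hε.le hb]
  gcongr

theorem stmt_18_general (α : ℕ → Type) [∀ n, MeasurableSpace (α n)]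
    (lam : (n : ℕ) → Measure (α n))
    (f : (n : ℕ) → ℝ → α n → ℝ)
    (hfnn : ∀ n u x, 0 ≤ f n u x)
    (hfmeas : ∀ n u, Measurable (f n u))
    (hprob : ∀ n u, ∫⁻ x, ENNReal.ofReal (f n u x) ∂(lam n) = 1)
    (u Γ : ℝ) (hΓ : 0 < Γ)
    (Z : (n : ℕ) → α n → ℝ) (hZmeas : ∀ n, Measurable (Z n))
    -- (a) `Z_n → N(0,Γ)` in distribution under `P_{n,0}`
    (ha : ∀ φ : BoundedContinuousFunction ℝ ℝ,
      Tendsto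
        (fun n => ∫ x, φ (Z n x)
          ∂((lam n).withDensity fun x => ENNReal.ofReal (f n 0 x)))
        atTop
        (nhds (∫ z, φ z ∂(ProbabilityTheory.gaussianReal 0 Γ.toNNReal))))
    -- (b) `ln(f_{n,u}/f_{n,0}) − u Z_n + u²Γ/2 → 0` in `P_{n,0}`-probability
    (hb : ∀ δ : ℝ, 0 < δ →
      Tendsto
        (fun n => ((lam n).withDensity fun x => ENNReal.ofReal (f n 0 x))
          {x : α n | δ ≤
            |Real.log (f n u x / f n 0 x) - u * Z n x + u ^ 2 / 2 * Γ|})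
        atTop (nhds 0)) :
    ENNReal.ofReal (1 / 4 * Real.exp (-(u ^ 2) * Γ / 2)) ≤
      atTop.liminf fun n =>
        sInf {r : ℝ≥0∞ | ∃ A : Set (α n), MeasurableSet A ∧
          3 / 4 ≤ ((lam n).withDensity fun x => ENNReal.ofReal (f n 0 x)) A ∧
          r = ((lam n).withDensity fun x => ENNReal.ofReal (f n u x)) A} := by
  have : ∀ n, IsProbabilityMeasure ((lam n).withDensity fun x ↦ ENNReal.ofReal (f n 0 x)) :=
    fun n ↦ ⟨by rw [withDensity_apply _ .univ, setLIntegral_univ, hprob n 0]⟩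
  have h34 : (3 / 4 : ℝ≥0∞) = ENNReal.ofReal (3 / 4) := by
    rw [ENNReal.ofReal_div_of_pos (by norm_num)]; norm_num
  rcases eq_or_ne u 0 with rfl | hu
  · refine le_liminf_of_le (by isBoundedDefault) (.of_forall fun n ↦ le_sInf ?_)
    rintro _ ⟨A, -, hA, rfl⟩
    refine le_trans ?_ hA
    rw [h34]
    exact ENNReal.ofReal_le_ofReal (by norm_num)
  set v : ℝ≥0 := ⟨u ^ 2, sq_nonneg u⟩ * Γ.toNNReal
  have hv : v ≠ 0 := mul_ne_zero
    (fun h ↦ hu (pow_eq_zero_iff two_ne_zero |>.mp (congrArg Subtype.val h))) (by simpa using hΓ)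
  have hlaw (F : Set ℝ) (hF : IsClosed F) : atTop.limsup (fun n ↦
      ((lam n).withDensity fun x ↦ ENNReal.ofReal (f n 0 x)) ((fun x ↦ u * Z n x) ⁻¹' F))
        ≤ gaussianReal 0 v F := by
    have := limsup_measure_preimage_le_of_tendsto_integral _ hZmeas _ ha
      (hF.preimage (continuous_const_mul u))
    rwa [← Measure.map_apply (measurable_const_mul u) hF.measurableSet,
      gaussianReal_map_const_mul, mul_zero] at this
  have key (ε : ℝ) (hε : 0 < ε) := ofReal_le_liminf_sInf_withDensity (p := 3 / 4)
    (fun n ↦ hfmeas n 0) (fun n ↦ hfmeas n u) (fun n ↦ hfnn n u) hε (by positivity) (hb ε hε)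
    ((hlaw _ (isClosed_Iic.union isClosed_Icc)).trans_lt
      ((gaussianReal_Iic_union_Icc_le hv hε.le).trans_lt
        (ENNReal.ofReal_lt_ofReal_iff'.mpr ⟨lt_add_of_pos_right _ hε, by positivity⟩)))
  rw [h34]
  refine le_of_tendsto ?_ (eventually_nhdsWithin_of_forall (a := 0) (s := Ioi 0) key)
  refine ((ENNReal.continuous_ofReal.comp (by fun_prop)).tendsto' (0 : ℝ) _ ?_).mono_left
    nhdsWithin_le_nhds
  simp only [Function.comp_apply, mul_zero, zero_div, add_zero, zero_add, sub_zero]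
  congr 1
  ring_nf

/-- contiguity lower bound from LAN at a single `u`: if
`Z_n → N(0,Γ)` in distribution under `P_{n,0}` and the log-likelihood ratio satisfies
`ln(f_{n,u}/f_{n,0})(X) − u Z_n(X) + u²Γ/2 → 0` in `P_{n,0}`-probability, then
`liminf_n inf {P_{n,u}(A) : P_{n,0}(A) ≥ 3/4} ≥ (1/4) e^{−u²Γ/2}`. -/
theorem stmt_18 (α : ℕ → Type) [∀ n, MeasurableSpace (α n)]
    (lam : (n : ℕ) → Measure (α n)) [∀ n, SigmaFinite (lam n)]
    (f : (n : ℕ) → ℝ → α n → ℝ)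
    (hfnn : ∀ n u x, 0 ≤ f n u x)
    (hfmeas : ∀ n u, Measurable (f n u))
    (hprob : ∀ n u, ∫⁻ x, ENNReal.ofReal (f n u x) ∂(lam n) = 1)
    (hpos : ∀ n, ∀ᵐ x ∂(lam n), 0 < f n 0 x)
    (u Γ : ℝ) (hΓ : 0 < Γ)
    (Z : (n : ℕ) → α n → ℝ) (hZmeas : ∀ n, Measurable (Z n))
    -- (a) `Z_n → N(0,Γ)` in distribution under `P_{n,0}`
    (ha : ∀ φ : BoundedContinuousFunction ℝ ℝ,
      Tendsto
        (fun n => ∫ x, φ (Z n x)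
          ∂((lam n).withDensity fun x => ENNReal.ofReal (f n 0 x)))
        atTop
        (nhds (∫ z, φ z ∂(ProbabilityTheory.gaussianReal 0 Γ.toNNReal))))
    -- (b) `ln(f_{n,u}/f_{n,0}) − u Z_n + u²Γ/2 → 0` in `P_{n,0}`-probability
    (hb : ∀ δ : ℝ, 0 < δ →
      Tendsto
        (fun n => ((lam n).withDensity fun x => ENNReal.ofReal (f n 0 x))
          {x : α n | δ ≤
            |Real.log (f n u x / f n 0 x) - u * Z n x + u ^ 2 / 2 * Γ|})
        atTop (nhds 0)) :
    ENNReal.ofReal (1 / 4 * Real.exp (-(u ^ 2) * Γ / 2)) ≤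
      atTop.liminf fun n =>
        sInf {r : ℝ≥0∞ | ∃ A : Set (α n), MeasurableSet A ∧
          3 / 4 ≤ ((lam n).withDensity fun x => ENNReal.ofReal (f n 0 x)) A ∧
          r = ((lam n).withDensity fun x => ENNReal.ofReal (f n u x)) A} :=
  stmt_18_general α lam f hfnn hfmeas hprob u Γ hΓ Z hZmeas ha hb
end

section
/- Let Θ be a compact subset of ℝ, let J₀ = {1,…,N} be a finite index set, and for each n let π_{j,n} ∈ ℝ∖{0} and θ_{j,n} ∈ Θ (j ∈ J₀) be such that G_{1,n} = Σ_{j: π_{j,n}>0} π_{j,n} δ_{θ_{j,n}} and G_{2,n} = Σ_{j: π_{j,n}<0} (−π_{j,n}) δ_{θ_{j,n}} are probability measures on Θ. Suppose there are an integer S ≥ 1, scaling sequences ε_{0,n} ≡ 0 < ε_{1,n} < ⋯ < ε_{S,n} ≡ 1 with ε_{s,n} = o(ε_{s+1,n}) as n → ∞ for each 0 ≤ s < S, a function 𝔰 : J₀ × J₀ → {0,…,S} which is symmetric, vanishes on the diagonal, and satisfies the ultrametric inequality 𝔰(j,k) ≤ max(𝔰(j,l), 𝔰(l,k)), and a function 𝔳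 from subsets of J₀ to {0,…,S}, such that |θ_{j,n} − θ_{k,n}| ≍ ε_{𝔰(j,k),n} for all j,k ∈ J₀ and |Σ_{j∈J} π_{j,n}| ≍ ε_{𝔳(J),n} for all J ⊆ J₀ (where a_n ≍ b_n means there are constants 0 < c ≤ C with c b_n ≤ a_n ≤ C b_n for all n). Let 𝒯 be the tree whose vertices are the distinct ultrametric balls B_𝔰(j,s) = {k ∈ J₀ : 𝔰(j,k) ≤ s} for j ∈ J₀ and s ∈ {0,…,S}, with root J₀; for a vertex J ≠ J₀ let p(J) denote its parent (the smallest ball in 𝒯 strictly containing J), and let 𝔰(J) = max_{j,k∈J} 𝔰(j,k). Then W(G_{1,n}, G_{2,n}) ≍ max { ε_{𝔳(J),n} · ε_{𝔰(p(J)),n} : J a vertex of 𝒯 with J ≠ J₀ }. -/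
open MeasureTheory Filter Finset
open scoped ENNReal

/-- The (L¹-)Wasserstein distance `W(G₁,G₂) = ∫ |G₁((−∞,t]) − G₂((−∞,t])| dt`. -/
noncomputable def wass (G₁ G₂ : Measure ℝ) : ℝ :=
  ∫ t, |(G₁ (Set.Iic t)).toReal - (G₂ (Set.Iic t)).toReal|

/-- The closed ultrametric ball `B_𝔰(j,t) = {k : 𝔰(j,k) ≤ t}`. -/
def umBall {N : ℕ} (s : Fin N → Fin N → ℕ) (j : Fin N) (t : ℕ) : Finset (Fin N) :=
  Finset.univ.filter fun k => s j k ≤ t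

/-- The vertices of the coarse-graining tree `𝒯`: the distinct ultrametric balls. -/
def treeVerts {N : ℕ} (s : Fin N → Fin N → ℕ) (S : ℕ) : Set (Finset (Fin N)) :=
  {J | ∃ j t, t ≤ S ∧ J = umBall s j t}

/-- `K` is the parent of `J` in the tree: the smallest vertex strictly containing `J`. -/
def IsParent {N : ℕ} (s : Fin N → Fin N → ℕ) (S : ℕ) (K J : Finset (Fin N)) : Prop :=
  K ∈ treeVerts s S ∧ J ⊂ K ∧ ∀ H ∈ treeVerts s S, J ⊂ H → K ⊆ H

/-- The `𝔰`-diameter `𝔰(K) = max_{j,k ∈ K} 𝔰(j,k)` of a vertex. -/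
def sDiam {N : ℕ} (s : Fin N → Fin N → ℕ) (K : Finset (Fin N)) : ℕ :=
  K.sup fun j => K.sup fun k => s j k

/-!
`W(G₁, G₂) = ∫ |F|` for the signed distribution function `F(t) = ∑ⱼ πⱼ 𝟙[θⱼ ≤ t]`, whose total
mass is `0`.

Upper bound: telescope `F` down the tree, moving at each level the mass of every ball `J` to a
representative of its parent `K`. Each move costs `|π(J)| · |θ - θ'| ≲ ε_{𝔳(J)} ε_{𝔰(K)}`, and
there are at most `S · N` moves.

Lower bound: the atoms of a vertex `J` are at distance at least `h ≍ ε_{𝔰(p(J))}` from all other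
atoms. Integrating `F(τ + h) - F(τ)` over the union of the windows `[θⱼ - h, θⱼ)`, `j ∈ J`, picks
out exactly `h · π(J)`, so `h · |π(J)| ≤ 2 W`.
-/

noncomputable def signedCdf {ι : Type*} [Fintype ι] (w x : ι → ℝ) (t : ℝ) : ℝ :=
  ∑ i, w i * (Set.Ici (x i)).indicator 1 t

lemma indicator_Ici_sub_indicator_Ici {a b : ℝ} (hab : a ≤ b) (t : ℝ) :
    (Set.Ici a).indicator (1 : ℝ → ℝ) t - (Set.Ici b).indicator 1 t =
      (Set.Ico a b).indicator 1 t := by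
  rw [← Set.Ici_sdiff_Ici, Set.indicator_sdiff (Set.Ici_subset_Ici.2 hab), Pi.sub_apply]

lemma integrable_indicator_Ico_one (a b : ℝ) : Integrable ((Set.Ico a b).indicator (1 : ℝ → ℝ)) :=
  (integrable_indicator_iff measurableSet_Ico).2 (integrableOn_const measure_Ico_lt_top.ne)

lemma integrable_indicator_Ici_sub (a b : ℝ) :
    Integrable fun t => (Set.Ici a).indicator (1 : ℝ → ℝ) t - (Set.Ici b).indicator 1 t := by
  wlog hab : a ≤ b generalizing a b
  · convert (this b a (le_of_not_ge hab)).neg using 2 with t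
    simp
  simp_rw [indicator_Ici_sub_indicator_Ici hab]
  exact integrable_indicator_Ico_one a b

lemma integral_abs_indicator_Ici_sub (a b : ℝ) :
    ∫ t, |(Set.Ici a).indicator (1 : ℝ → ℝ) t - (Set.Ici b).indicator 1 t| = |a - b| := by
  wlog hab : a ≤ b generalizing a b
  · rw [abs_sub_comm, ← this b a (le_of_not_ge hab)]
    exact integral_congr_ae (.of_forall fun t => abs_sub_comm _ _)
  have h t : |(Set.Ico a b).indicator (1 : ℝ → ℝ) t| = (Set.Ico a b).indicator 1 t :=
    abs_of_nonneg (Set.indicator_nonneg (fun _ _ => zero_le_one) t)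
  simp_rw [indicator_Ici_sub_indicator_Ici hab, h]
  rw [integral_indicator_one measurableSet_Ico, Real.volume_real_Ico_of_le hab,
    abs_of_nonpos (sub_nonpos.2 hab), neg_sub]

lemma integrable_signedCdf {ι : Type*} [Fintype ι] {w : ι → ℝ} (hw : ∑ i, w i = 0)
    (x : ι → ℝ) : Integrable (signedCdf w x) := by
  have h : signedCdf w x = fun t => ∑ i, w i *
      ((Set.Ici (x i)).indicator (1 : ℝ → ℝ) t - (Set.Ici 0).indicator 1 t) := by
    ext t
    simp only [signedCdf, mul_sub, Finset.sum_sub_distrib, ← Finset.sum_mul, hw, zero_mul,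
      sub_zero]
  rw [h]
  exact integrable_finsetSum _ fun i _ => (integrable_indicator_Ici_sub _ _).const_mul _

lemma sum_filter_pos_sub_sum_filter_neg {ι : Type*} [Fintype ι] (w g : ι → ℝ) :
    ∑ i ∈ univ.filter (fun i => 0 < w i), w i * g i -
      ∑ i ∈ univ.filter (fun i => w i < 0), -w i * g i = ∑ i, w i * g i := by
  rw [Finset.sum_filter, Finset.sum_filter, ← Finset.sum_sub_distrib]
  refine Finset.sum_congr rfl fun i _ => ?_
  rcases lt_trichotomy (w i) 0 with h | h | h
  · simp [h, h.not_gt]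
  · simp [h]
  · simp [h, h.not_gt]

lemma toReal_sum_smul_dirac_Iic {ι : Type*} (A : Finset ι) {a : ι → ℝ} (ha : ∀ i ∈ A, 0 ≤ a i)
    (x : ι → ℝ) (t : ℝ) :
    ((∑ i ∈ A, ENNReal.ofReal (a i) • Measure.dirac (x i)) (Set.Iic t)).toReal =
      ∑ i ∈ A, a i * (Set.Ici (x i)).indicator 1 t := by
  rw [Measure.coe_finsetSum, Finset.sum_apply, ENNReal.toReal_sum]
  · refine Finset.sum_congr rfl fun i hi => ?_
    by_cases h : x i ≤ t <;> simp [Measure.dirac_apply' _ measurableSet_Iic, h, ha i hi]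
  · exact fun i _ => ENNReal.mul_ne_top ENNReal.ofReal_ne_top (measure_ne_top _ _)

lemma wass_eq_integral_abs_signedCdf {ι : Type*} [Fintype ι] (w x : ι → ℝ) :
    wass (∑ i ∈ univ.filter (fun i => 0 < w i), ENNReal.ofReal (w i) • Measure.dirac (x i))
        (∑ i ∈ univ.filter (fun i => w i < 0), ENNReal.ofReal (-w i) • Measure.dirac (x i)) =
      ∫ t, |signedCdf w x t| := by
  refine integral_congr_ae (.of_forall fun t => ?_)
  beta_reduce
  rw [toReal_sum_smul_dirac_Iic _ (fun i hi => (Finset.mem_filter.1 hi).2.le),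
    toReal_sum_smul_dirac_Iic _ (fun i hi => neg_nonneg.2 (Finset.mem_filter.1 hi).2.le),
    sum_filter_pos_sub_sum_filter_neg, signedCdf]

lemma indicator_Ico_sub_eq_indicator_Ici_add_sub (a : ℝ) {h : ℝ} (hh : 0 ≤ h) (t : ℝ) :
    (Set.Ico (a - h) a).indicator (1 : ℝ → ℝ) t =
      (Set.Ici a).indicator 1 (t + h) - (Set.Ici a).indicator 1 t := by
  by_cases h₁ : a ≤ t
  · have h₂ : t ∉ Set.Ico (a - h) a := fun ht => ht.2.not_ge h₁
    simp [h₁, h₂, show a ≤ t + h by linarith]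
  · by_cases h₃ : a ≤ t + h
    · have h₂ : t ∈ Set.Ico (a - h) a := ⟨by linarith, not_le.1 h₁⟩
      simp [h₁, h₂, h₃]
    · have h₂ : t ∉ Set.Ico (a - h) a := fun ht => h₃ (by linarith [ht.1])
      simp [h₁, h₂, h₃]

lemma setIntegral_biUnion_Ico_indicator_Ico {ι : Type*} (x : ι → ℝ) (J : Finset ι) {h : ℝ}
    (hh : 0 ≤ h) (hsep : ∀ j ∈ J, ∀ k ∉ J, h ≤ |x j - x k|) (i : ι) [Decidable (i ∈ J)] :
    ∫ t in ⋃ j ∈ J, Set.Ico (x j - h) (x j), (Set.Ico (x i - h) (x i)).indicator 1 t =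
      if i ∈ J then h else 0 := by
  rw [setIntegral_indicator measurableSet_Ico]
  simp only [Pi.one_apply]
  rw [setIntegral_const, smul_eq_mul, mul_one]
  split_ifs with hi
  · have hsub : Set.Ico (x i - h) (x i) ⊆ ⋃ j ∈ J, Set.Ico (x j - h) (x j) :=
      Set.subset_biUnion_of_mem (u := fun j => Set.Ico (x j - h) (x j)) hi
    rw [Set.inter_eq_right.2 hsub, Real.volume_real_Ico_of_le (by linarith)]
    ring
  · have hdisj : (⋃ j ∈ J, Set.Ico (x j - h) (x j)) ∩ Set.Ico (x i - h) (x i) = ∅ := by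
      refine Set.eq_empty_iff_forall_notMem.2 fun t ⟨htV, hti⟩ => ?_
      obtain ⟨j, hj, htj⟩ := Set.mem_iUnion₂.1 htV
      exact (hsep j hj i hi).not_gt
        (abs_sub_lt_iff.2 ⟨by linarith [htj.1, hti.2], by linarith [htj.2, hti.1]⟩)
    simp [hdisj]

lemma mul_abs_sum_le_two_mul_integral_abs_signedCdf {ι : Type*} [Fintype ι] {w : ι → ℝ}
    (hw : ∑ i, w i = 0) (x : ι → ℝ) (J : Finset ι) {h : ℝ} (hh : 0 ≤ h)
    (hsep : ∀ j ∈ J, ∀ k ∉ J, h ≤ |x j - x k|) :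
    h * |∑ j ∈ J, w j| ≤ 2 * ∫ t, |signedCdf w x t| := by
  classical
  set F := signedCdf w x
  set V := ⋃ j ∈ J, Set.Ico (x j - h) (x j)
  have hshift t : ∑ i, w i * (Set.Ico (x i - h) (x i)).indicator 1 t = F (t + h) - F t := by
    simp only [F, signedCdf, ← Finset.sum_sub_distrib, ← mul_sub,
      indicator_Ico_sub_eq_indicator_Ici_add_sub _ hh]
  have hF : Integrable F := integrable_signedCdf hw x
  have hdiff : Integrable fun t => F (t + h) - F t := (hF.comp_add_right h).sub hF
  calc h * |∑ j ∈ J, w j|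
      = |∑ i, w i * ∫ t in V, (Set.Ico (x i - h) (x i)).indicator 1 t| := by
        simp_rw [V, setIntegral_biUnion_Ico_indicator_Ico x J hh hsep, mul_ite, mul_zero,
          Finset.sum_ite_mem, Finset.univ_inter, ← Finset.sum_mul, abs_mul, abs_of_nonneg hh,
          mul_comm]
    _ = |∫ t in V, (F (t + h) - F t)| := by
        simp_rw [← hshift, ← integral_const_mul]
        rw [integral_finsetSum]
        exact fun i _ => (integrable_indicator_Ico_one _ _).integrableOn.integrable.const_mul _
    _ ≤ ∫ t in V, |F (t + h) - F t| :=
        abs_integral_le_integral_abs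
    _ ≤ ∫ t, |F (t + h) - F t| :=
        setIntegral_le_integral hdiff.abs (.of_forall fun _ => abs_nonneg _)
    _ ≤ ∫ t, (|F (t + h)| + |F t|) :=
        integral_mono hdiff.abs ((hF.comp_add_right h).abs.add hF.abs) fun t => abs_sub _ _
    _ = 2 * ∫ t, |F t| := by
        rw [integral_add (hF.comp_add_right h).abs hF.abs,
          integral_add_right_eq_self (fun t => |F t|)]
        ring

section Telescoping

variable {ι : Type*} [Fintype ι] [DecidableEq ι] {w : ι → ℝ} {S : ℕ} {r : ℕ → ι → ι}

/-- `r u i` is a representative of the level-`u` cluster of `i`; `hr` says that clusters are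
nested, and `hr0`, `hrS` that level `0` is trivial and level `S` a single cluster. -/
lemma sum_mul_eq_sum_range_sum_fiber (hw : ∑ i, w i = 0) (φ : ι → ℝ)
    (hr0 : ∀ i, φ (r 0 i) = φ i) (hrS : ∀ i j, r S i = r S j)
    (hr : ∀ u i, r (u + 1) (r u i) = r (u + 1) i) :
    ∑ i, w i * φ i = ∑ u ∈ range S, ∑ i,
      (∑ j ∈ univ.filter (fun j => r u j = i), w j) * (φ i - φ (r (u + 1) i)) := by
  have hfiber u (ψ : ι → ℝ) :
      ∑ i, (∑ j ∈ univ.filter (fun j => r u j = i), w j) * ψ i = ∑ j, w j * ψ (r u j) := by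
    simp_rw [Finset.sum_mul]
    rw [← Finset.sum_fiberwise univ (r u) (fun j => w j * ψ (r u j))]
    exact sum_congr rfl fun i _ => sum_congr rfl fun j hj => by rw [(mem_filter.1 hj).2]
  obtain ⟨c, hc⟩ : ∃ c, ∀ j, φ (r S j) = c := by
    rcases isEmpty_or_nonempty ι with h | ⟨⟨i₀⟩⟩
    · exact ⟨0, isEmptyElim⟩
    · exact ⟨φ (r S i₀), fun j => by rw [hrS j i₀]⟩
  simp_rw [hfiber, hr]
  rw [Finset.sum_comm]
  simp_rw [← Finset.mul_sum, Finset.sum_range_sub', hr0, hc, mul_sub, Finset.sum_sub_distrib,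
    ← Finset.sum_mul, hw, zero_mul, sub_zero]

lemma integral_abs_signedCdf_le_sum_range_sum_fiber (hw : ∑ i, w i = 0) (x : ι → ℝ)
    (hr0 : ∀ i, x (r 0 i) = x i) (hrS : ∀ i j, r S i = r S j)
    (hr : ∀ u i, r (u + 1) (r u i) = r (u + 1) i) :
    ∫ t, |signedCdf w x t| ≤ ∑ u ∈ range S, ∑ i,
      |∑ j ∈ univ.filter (fun j => r u j = i), w j| * |x i - x (r (u + 1) i)| := by
  set m := fun u i => ∑ j ∈ univ.filter (fun j => r u j = i), w j
  set step := fun (a t : ℝ) => (Set.Ici a).indicator (1 : ℝ → ℝ) t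
  have hF t : signedCdf w x t =
      ∑ u ∈ range S, ∑ i, m u i * (step (x i) t - step (x (r (u + 1) i)) t) :=
    sum_mul_eq_sum_range_sum_fiber hw (fun i => step (x i) t) (fun i => by simp only [hr0]) hrS hr
  have hint u i : Integrable fun t => |m u i| * |step (x i) t - step (x (r (u + 1) i)) t| :=
    (integrable_indicator_Ici_sub _ _).abs.const_mul _
  calc ∫ t, |signedCdf w x t|
      ≤ ∫ t, ∑ u ∈ range S, ∑ i, |m u i| * |step (x i) t - step (x (r (u + 1) i)) t| := by
        refine integral_mono_of_nonneg (.of_forall fun _ => abs_nonneg _)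
          (integrable_finsetSum _ fun u _ => integrable_finsetSum _ fun i _ => hint u i)
          (.of_forall fun t => ?_)
        beta_reduce
        rw [hF]
        refine (abs_sum_le_sum_abs _ _).trans (sum_le_sum fun u _ => ?_)
        exact (abs_sum_le_sum_abs _ _).trans_eq (by simp_rw [abs_mul])
    _ = ∑ u ∈ range S, ∑ i, |m u i| * |x i - x (r (u + 1) i)| := by
        rw [integral_finsetSum _ fun u _ => integrable_finsetSum _ fun i _ => hint u i]
        refine sum_congr rfl fun u _ => ?_
        rw [integral_finsetSum _ fun i _ => hint u i]
        simp_rw [integral_const_mul, step, integral_abs_indicator_Ici_sub]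

end Telescoping

lemma exists_uniform_bounds {α : Type*} [Finite α] {f g : α → ℕ → ℝ} (hf : ∀ a n, 0 ≤ f a n)
    (h : ∀ a, ∃ c C : ℝ, 0 < c ∧ ∀ n, c * f a n ≤ g a n ∧ g a n ≤ C * f a n) :
    ∃ c C : ℝ, 0 < c ∧ 0 ≤ C ∧ ∀ a n, c * f a n ≤ g a n ∧ g a n ≤ C * f a n := by
  choose c C hc hcC using h
  obtain ⟨c₀, hc₀, hc₀le⟩ : ∃ c₀, 0 < c₀ ∧ ∀ a, c₀ ≤ c a := by
    rcases isEmpty_or_nonempty α with hα | hα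
    · exact ⟨1, one_pos, isEmptyElim⟩
    · obtain ⟨a₀, ha₀⟩ := Finite.exists_min c
      exact ⟨c a₀, hc a₀, ha₀⟩
  obtain ⟨C₀, hC₀⟩ := Finite.bddAbove_range C
  refine ⟨c₀, max C₀ 0, hc₀, le_max_right _ _, fun a n => ⟨?_, ?_⟩⟩
  · exact (mul_le_mul_of_nonneg_right (hc₀le a) (hf a n)).trans (hcC a n).1
  · exact (hcC a n).2.trans
      (mul_le_mul_of_nonneg_right ((hC₀ ⟨a, rfl⟩).trans (le_max_left _ _)) (hf a n))

structure IsUltrametric {N : ℕ} (s : Fin N → Fin N → ℕ) : Prop where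
  symm : ∀ j k, s j k = s k j
  self : ∀ j, s j j = 0
  le_max : ∀ j k l, s j k ≤ max (s j l) (s l k)

section Tree

variable {N : ℕ} {s : Fin N → Fin N → ℕ} {S : ℕ}

lemma mem_umBall {j k : Fin N} {t : ℕ} : k ∈ umBall s j t ↔ s j k ≤ t := by
  simp [umBall]

lemma umBall_mono (j : Fin N) {t t' : ℕ} (h : t ≤ t') : umBall s j t ⊆ umBall s j t' :=
  fun _ hk => mem_umBall.2 ((mem_umBall.1 hk).trans h)

lemma umBall_eq_univ (hsle : ∀ j k, s j k ≤ S) (j : Fin N) : umBall s j S = univ :=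
  eq_univ_of_forall fun k => mem_umBall.2 (hsle j k)

lemma s_le_sDiam {K : Finset (Fin N)} {j k : Fin N} (hj : j ∈ K) (hk : k ∈ K) :
    s j k ≤ sDiam s K :=
  (le_sup (f := fun k => s j k) hk).trans (le_sup (f := fun j => K.sup fun k => s j k) hj)

lemma sDiam_le (hsle : ∀ j k, s j k ≤ S) (K : Finset (Fin N)) : sDiam s K ≤ S :=
  Finset.sup_le fun j _ => Finset.sup_le fun k _ => hsle j k

lemma sDiam_mono {J K : Finset (Fin N)} (h : J ⊆ K) : sDiam s J ≤ sDiam s K :=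
  Finset.sup_le fun _ hj => Finset.sup_le fun _ hk => s_le_sDiam (h hj) (h hk)

noncomputable def umRep (s : Fin N → Fin N → ℕ) (j : Fin N) (t : ℕ) : Fin N :=
  if h : (umBall s j t).Nonempty then (umBall s j t).min' h else j

namespace IsUltrametric

variable (hs : IsUltrametric s)
include hs

lemma self_mem_umBall (j : Fin N) (t : ℕ) : j ∈ umBall s j t :=
  mem_umBall.2 (hs.self j ▸ Nat.zero_le t)

lemma umBall_eq_of_mem {j k : Fin N} {t : ℕ} (hk : k ∈ umBall s j t) :
    umBall s k t = umBall s j t := by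
  have hjk := mem_umBall.1 hk
  ext l
  simp only [mem_umBall]
  constructor
  · exact fun hl => (hs.le_max j l k).trans (max_le hjk hl)
  · exact fun hl => (hs.le_max k l j).trans (max_le (hs.symm k j ▸ hjk) hl)

lemma sDiam_umBall_le (j : Fin N) (t : ℕ) : sDiam s (umBall s j t) ≤ t :=
  Finset.sup_le fun a ha => Finset.sup_le fun b hb =>
    (hs.le_max a b j).trans (max_le (hs.symm a j ▸ mem_umBall.1 ha) (mem_umBall.1 hb))

/-- The ball `B(j, 𝔰(j, k))` strictly contains `J`, hence contains the parent of `J`. -/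
lemma sDiam_le_of_isParent (hsle : ∀ j k, s j k ≤ S) {J K : Finset (Fin N)}
    (hJ : J ∈ treeVerts s S) (hKJ : IsParent s S K J) {j k : Fin N} (hj : j ∈ J) (hk : k ∉ J) :
    sDiam s K ≤ s j k := by
  obtain ⟨j₀, t, -, rfl⟩ := hJ
  rw [← hs.umBall_eq_of_mem hj] at hk hKJ
  have hJH : umBall s j t ⊂ umBall s j (s j k) :=
    ssubset_of_subset_not_subset
      (umBall_mono j (le_of_not_ge fun h => hk (mem_umBall.2 h)))
      fun h => hk (h (mem_umBall.2 le_rfl))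
  exact (sDiam_mono (hKJ.2.2 _ ⟨j, _, hsle j k, rfl⟩ hJH)).trans (hs.sDiam_umBall_le j _)

lemma isParent_umBall_succ {j : Fin N} {u : ℕ} (hu : u < S)
    (hne : umBall s j u ≠ umBall s j (u + 1)) :
    IsParent s S (umBall s j (u + 1)) (umBall s j u) := by
  refine ⟨⟨j, u + 1, hu, rfl⟩, ssubset_of_subset_of_ne (umBall_mono j u.le_succ) hne, ?_⟩
  rintro H ⟨j', t, -, rfl⟩ hJH
  have hH := hs.umBall_eq_of_mem (hJH.subset (hs.self_mem_umBall j u))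
  rw [← hH] at hJH ⊢
  refine umBall_mono j (Nat.succ_le_of_lt (lt_of_not_ge fun ht => ?_))
  exact hJH.not_subset (umBall_mono j ht)

lemma umRep_mem (j : Fin N) (t : ℕ) : umRep s j t ∈ umBall s j t := by
  rw [umRep, dif_pos ⟨j, hs.self_mem_umBall j t⟩]
  exact min'_mem _ _

lemma umRep_eq_of_umBall_eq {j k : Fin N} {t t' : ℕ} (h : umBall s j t = umBall s k t') :
    umRep s j t = umRep s k t' := by
  have hne : (umBall s j t).Nonempty := ⟨j, hs.self_mem_umBall j t⟩
  simp only [umRep, dif_pos (h ▸ hne), h]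

lemma umRep_eq_umRep_iff {j k : Fin N} {t : ℕ} : umRep s k t = umRep s j t ↔ s j k ≤ t := by
  refine ⟨fun h => ?_, fun h => hs.umRep_eq_of_umBall_eq (hs.umBall_eq_of_mem (mem_umBall.2 h))⟩
  have hk := mem_umBall.1 (hs.umRep_mem k t)
  rw [h] at hk
  exact (hs.le_max j k (umRep s j t)).trans
    (max_le (mem_umBall.1 (hs.umRep_mem j t)) (hs.symm k _ ▸ hk))

lemma umRep_umRep_succ (j : Fin N) (u : ℕ) : umRep s (umRep s j u) (u + 1) = umRep s j (u + 1) :=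
  hs.umRep_eq_of_umBall_eq (hs.umBall_eq_of_mem (umBall_mono j u.le_succ (hs.umRep_mem j u)))

lemma integral_abs_signedCdf_le_of_tree (hsle : ∀ j k, s j k ≤ S) {w x : Fin N → ℝ}
    (hw : ∑ j, w j = 0) (hx : ∀ j k, s j k = 0 → x j = x k) {B : ℝ} (hB : 0 ≤ B)
    (hparent : ∀ J K, J ∈ treeVerts s S → J ≠ univ → IsParent s S K J →
      ∀ j ∈ K, ∀ k ∈ K, |∑ i ∈ J, w i| * |x j - x k| ≤ B) :
    ∫ t, |signedCdf w x t| ≤ S * N * B := by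
  classical
  have hr0 j : x (umRep s j 0) = x j :=
    hx _ _ (Nat.le_zero.1 (hs.symm j _ ▸ mem_umBall.1 (hs.umRep_mem j 0)))
  have hrS j k : umRep s j S = umRep s k S :=
    hs.umRep_eq_of_umBall_eq ((umBall_eq_univ hsle j).trans (umBall_eq_univ hsle k).symm)
  refine (integral_abs_signedCdf_le_sum_range_sum_fiber (r := fun u j => umRep s j u) hw x hr0
    hrS fun u j => hs.umRep_umRep_succ j u).trans ?_
  calc _ ≤ ∑ _u ∈ range S, ∑ _i : Fin N, B :=
        sum_le_sum fun u hu => sum_le_sum fun i _ => ?_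
    _ = S * N * B := by simp [mul_assoc]
  by_cases hi : ∃ j, umRep s j u = i
  · obtain ⟨j, rfl⟩ := hi
    have hfiber : univ.filter (fun k => umRep s k u = umRep s j u) = umBall s j u := by
      ext k
      simp [hs.umRep_eq_umRep_iff, mem_umBall]
    simp only [hfiber, hs.umRep_umRep_succ]
    by_cases hne : umBall s j u = umBall s j (u + 1)
    · rw [hs.umRep_eq_of_umBall_eq hne, sub_self, abs_zero, mul_zero]
      exact hB
    · have hu : u < S := mem_range.1 hu
      refine hparent _ _ ⟨j, u, hu.le, rfl⟩ (fun hJ => hne ?_) (hs.isParent_umBall_succ hu hne) _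
        (umBall_mono j u.le_succ (hs.umRep_mem j u)) _ (hs.umRep_mem j (u + 1))
      rw [hJ, eq_comm, ← univ_subset_iff, ← hJ]
      exact umBall_mono j u.le_succ
  · rw [not_exists] at hi
    simp [hi, hB]

/-- The right-hand side of the theorem, `max_{J ≠ J₀} ε_{𝔳(J)} ε_{𝔰(p(J))}`, at a fixed `n`. -/
noncomputable def treeScale (s : Fin N → Fin N → ℕ) (S : ℕ) (v : Finset (Fin N) → ℕ)
    (ε : ℕ → ℝ) : ℝ :=
  sSup {r : ℝ | ∃ J K : Finset (Fin N), J ∈ treeVerts s S ∧ J ≠ Finset.univ ∧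
    IsParent s S K J ∧ r = ε (v J) * ε (sDiam s K)}

variable {v : Finset (Fin N) → ℕ} {ε : ℕ → ℝ} {w x : Fin N → ℝ}

lemma mul_treeScale_le_integral_abs_signedCdf (hsle : ∀ j k, s j k ≤ S)
    (hε : MonotoneOn ε (Set.Iic S)) (hε0 : ε 0 = 0) (hw : ∑ j, w j = 0)
    {c c' : ℝ} (hc : 0 < c) (hc' : 0 < c') (hx : ∀ j k, c * ε (s j k) ≤ |x j - x k|)
    (hmass : ∀ J, c' * ε (v J) ≤ |∑ j ∈ J, w j|) :
    c * c' / 2 * treeScale s S v ε ≤ ∫ t, |signedCdf w x t| := by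
  rw [← le_div_iff₀' (by positivity)]
  refine Real.sSup_le ?_ (div_nonneg (integral_nonneg fun _ => abs_nonneg _) (by positivity))
  rintro _ ⟨J, K, hJ, -, hKJ, rfl⟩
  rw [le_div_iff₀' (by positivity)]
  have hD := sDiam_le hsle K
  have hεD : 0 ≤ ε (sDiam s K) := hε0 ▸ hε (Nat.zero_le S) hD (Nat.zero_le _)
  have hsep j (hj : j ∈ J) k (hk : k ∉ J) : c * ε (sDiam s K) ≤ |x j - x k| :=
    (mul_le_mul_of_nonneg_left (hε hD (hsle j k) (hs.sDiam_le_of_isParent hsle hJ hKJ hj hk))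
      hc.le).trans (hx j k)
  have hJ := mul_abs_sum_le_two_mul_integral_abs_signedCdf hw x J (by positivity) hsep
  calc c * c' / 2 * (ε (v J) * ε (sDiam s K))
      = c * ε (sDiam s K) * (c' * ε (v J)) / 2 := by ring
    _ ≤ c * ε (sDiam s K) * |∑ j ∈ J, w j| / 2 := by gcongr; exact hmass J
    _ ≤ _ := by linarith

lemma integral_abs_signedCdf_le_mul_treeScale (hsle : ∀ j k, s j k ≤ S) (hvle : ∀ J, v J ≤ S)
    (hε : MonotoneOn ε (Set.Iic S)) (hε0 : ε 0 = 0) (hw : ∑ j, w j = 0)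
    {C C' : ℝ} (hC : 0 ≤ C) (hC' : 0 ≤ C') (hx : ∀ j k, |x j - x k| ≤ C * ε (s j k))
    (hmass : ∀ J, |∑ j ∈ J, w j| ≤ C' * ε (v J)) :
    ∫ t, |signedCdf w x t| ≤ S * N * (C' * C) * treeScale s S v ε := by
  have hεnn t (ht : t ≤ S) : 0 ≤ ε t := hε0 ▸ hε (Nat.zero_le S) ht (Nat.zero_le t)
  have hA : BddAbove {r : ℝ | ∃ J K : Finset (Fin N), J ∈ treeVerts s S ∧ J ≠ Finset.univ ∧
      IsParent s S K J ∧ r = ε (v J) * ε (sDiam s K)} := by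
    refine ((Set.finite_range fun JK : Finset (Fin N) × Finset (Fin N) =>
      ε (v JK.1) * ε (sDiam s JK.2)).subset ?_).bddAbove
    rintro _ ⟨J, K, -, -, -, rfl⟩
    exact ⟨(J, K), rfl⟩
  have hA0 : 0 ≤ treeScale s S v ε := Real.sSup_nonneg fun _ ⟨J, K, _, _, _, hr⟩ =>
    hr ▸ mul_nonneg (hεnn _ (hvle J)) (hεnn _ (sDiam_le hsle K))
  have hx0 j k (hjk : s j k = 0) : x j = x k := by
    have h := hx j k
    rw [hjk, hε0, mul_zero] at h
    exact sub_eq_zero.1 (abs_nonpos_iff.1 h)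
  refine (hs.integral_abs_signedCdf_le_of_tree hsle hw hx0
    (B := C' * C * treeScale s S v ε) (by positivity) ?_).trans_eq (by ring)
  intro J K hJ hJu hKJ j hj k hk
  calc |∑ i ∈ J, w i| * |x j - x k|
      ≤ (C' * ε (v J)) * (C * ε (sDiam s K)) := by
        refine mul_le_mul (hmass J) ((hx j k).trans ?_) (abs_nonneg _)
          (mul_nonneg hC' (hεnn _ (hvle J)))
        exact mul_le_mul_of_nonneg_left (hε (hsle j k) (sDiam_le hsle K) (s_le_sDiam hj hk)) hC
    _ = C' * C * (ε (v J) * ε (sDiam s K)) := by ring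
    _ ≤ C' * C * treeScale s S v ε :=
        mul_le_mul_of_nonneg_left (le_csSup hA ⟨J, K, hJ, hJu, hKJ, rfl⟩) (by positivity)

end IsUltrametric

end Tree

theorem stmt_19_general (N : ℕ)
    (π : ℕ → Fin N → ℝ) (θv : ℕ → Fin N → ℝ)
    (hp1 : ∀ n, ∑ j ∈ univ.filter (fun j => 0 < π n j), π n j = 1)
    (hp2 : ∀ n, ∑ j ∈ univ.filter (fun j => π n j < 0), -(π n j) = 1)
    (S : ℕ) (eps : ℕ → ℕ → ℝ)
    (heps0 : ∀ n, eps 0 n = 0)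
    (hmono : ∀ n, ∀ t < S, eps t n < eps (t + 1) n)
    (s : Fin N → Fin N → ℕ) (hsle : ∀ j k, s j k ≤ S)
    (hsymm : ∀ j k, s j k = s k j) (hdiag : ∀ j, s j j = 0)
    (hultra : ∀ j k l, s j k ≤ max (s j l) (s l k))
    (v : Finset (Fin N) → ℕ) (hvle : ∀ J, v J ≤ S)
    (hs_asymp : ∀ j k : Fin N, ∃ c C : ℝ, 0 < c ∧ ∀ n,
      c * eps (s j k) n ≤ |θv n j - θv n k| ∧ |θv n j - θv n k| ≤ C * eps (s j k) n)
    (hv_asymp : ∀ J : Finset (Fin N), ∃ c C : ℝ, 0 < c ∧ ∀ n,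
      c * eps (v J) n ≤ |∑ j ∈ J, π n j| ∧ |∑ j ∈ J, π n j| ≤ C * eps (v J) n) :
    ∃ c C : ℝ, 0 < c ∧ ∀ n : ℕ,
      c * sSup {r : ℝ | ∃ J K : Finset (Fin N), J ∈ treeVerts s S ∧ J ≠ Finset.univ ∧
            IsParent s S K J ∧ r = eps (v J) n * eps (sDiam s K) n} ≤
          wass
            (∑ j ∈ univ.filter (fun j => 0 < π n j),
              ENNReal.ofReal (π n j) • Measure.dirac (θv n j))
            (∑ j ∈ univ.filter (fun j => π n j < 0),
              ENNReal.ofReal (-(π n j)) • Measure.dirac (θv n j)) ∧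
        wass
            (∑ j ∈ univ.filter (fun j => 0 < π n j),
              ENNReal.ofReal (π n j) • Measure.dirac (θv n j))
            (∑ j ∈ univ.filter (fun j => π n j < 0),
              ENNReal.ofReal (-(π n j)) • Measure.dirac (θv n j)) ≤
          C * sSup {r : ℝ | ∃ J K : Finset (Fin N), J ∈ treeVerts s S ∧ J ≠ Finset.univ ∧
            IsParent s S K J ∧ r = eps (v J) n * eps (sDiam s K) n} := by
  have hs : IsUltrametric s := ⟨hsymm, hdiag, hultra⟩
  have hε n : MonotoneOn (eps · n) (Set.Iic S) :=
    (strictMonoOn_Iic_of_lt_succ (hmono n)).monotoneOn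
  have hεnn n t (ht : t ≤ S) : 0 ≤ eps t n :=
    heps0 n ▸ hε n (Nat.zero_le S) ht (Nat.zero_le t)
  obtain ⟨cS, CS, hcS, hCS, hθ⟩ := exists_uniform_bounds
    (f := fun p : Fin N × Fin N => eps (s p.1 p.2)) (fun p n => hεnn n _ (hsle _ _))
    fun p => hs_asymp p.1 p.2
  obtain ⟨cV, CV, hcV, hCV, hmass⟩ := exists_uniform_bounds
    (f := fun J => eps (v J)) (fun J n => hεnn n _ (hvle J)) hv_asymp
  refine ⟨cS * cV / 2, S * N * (CV * CS), by positivity, fun n => ?_⟩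
  have hw : ∑ j, π n j = 0 := by
    have h := sum_filter_pos_sub_sum_filter_neg (π n) 1
    simp only [Pi.one_apply, mul_one] at h
    linarith [hp1 n, hp2 n]
  rw [wass_eq_integral_abs_signedCdf]
  exact ⟨hs.mul_treeScale_le_integral_abs_signedCdf hsle (hε n) (heps0 n) hw hcS hcV
      (fun j k => (hθ (j, k) n).1) fun J => (hmass J n).1,
    hs.integral_abs_signedCdf_le_mul_treeScale hsle hvle (hε n) (heps0 n) hw hCS hCV
      (fun j k => (hθ (j, k) n).2) fun J => (hmass J n).2⟩

/-- Lemma: the Wasserstein distance in terms of the scaling tree: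
`W(G_{1,n}, G_{2,n}) ≍ max_{J ∈ 𝒯, J ≠ J₀} ε_{𝔳(J),n} ε_{𝔰(p(J)),n}`. -/
theorem stmt_19 (Θ : Set ℝ) (hΘ : IsCompact Θ) (N : ℕ) (hN : 0 < N)
    (π : ℕ → Fin N → ℝ) (θv : ℕ → Fin N → ℝ)
    (hπ : ∀ n j, π n j ≠ 0) (hθΘ : ∀ n j, θv n j ∈ Θ)
    (hp1 : ∀ n, ∑ j ∈ univ.filter (fun j => 0 < π n j), π n j = 1)
    (hp2 : ∀ n, ∑ j ∈ univ.filter (fun j => π n j < 0), -(π n j) = 1)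
    (S : ℕ) (hS : 1 ≤ S) (eps : ℕ → ℕ → ℝ)
    (heps0 : ∀ n, eps 0 n = 0) (hepsS : ∀ n, eps S n = 1)
    (hmono : ∀ n, ∀ t < S, eps t n < eps (t + 1) n)
    (hlittleo : ∀ t < S, Tendsto (fun n => eps t n / eps (t + 1) n) atTop (nhds 0))
    (s : Fin N → Fin N → ℕ) (hsle : ∀ j k, s j k ≤ S)
    (hsymm : ∀ j k, s j k = s k j) (hdiag : ∀ j, s j j = 0)
    (hultra : ∀ j k l, s j k ≤ max (s j l) (s l k))
    (v : Finset (Fin N) → ℕ) (hvle : ∀ J, v J ≤ S)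
    (hs_asymp : ∀ j k : Fin N, ∃ c C : ℝ, 0 < c ∧ ∀ n,
      c * eps (s j k) n ≤ |θv n j - θv n k| ∧ |θv n j - θv n k| ≤ C * eps (s j k) n)
    (hv_asymp : ∀ J : Finset (Fin N), ∃ c C : ℝ, 0 < c ∧ ∀ n,
      c * eps (v J) n ≤ |∑ j ∈ J, π n j| ∧ |∑ j ∈ J, π n j| ≤ C * eps (v J) n) :
    ∃ c C : ℝ, 0 < c ∧ ∀ n : ℕ,
      c * sSup {r : ℝ | ∃ J K : Finset (Fin N), J ∈ treeVerts s S ∧ J ≠ Finset.univ ∧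
            IsParent s S K J ∧ r = eps (v J) n * eps (sDiam s K) n} ≤
          wass
            (∑ j ∈ univ.filter (fun j => 0 < π n j),
              ENNReal.ofReal (π n j) • Measure.dirac (θv n j))
            (∑ j ∈ univ.filter (fun j => π n j < 0),
              ENNReal.ofReal (-(π n j)) • Measure.dirac (θv n j)) ∧
        wass
            (∑ j ∈ univ.filter (fun j => 0 < π n j),
              ENNReal.ofReal (π n j) • Measure.dirac (θv n j))
            (∑ j ∈ univ.filter (fun j => π n j < 0),
              ENNReal.ofReal (-(π n j)) • Measure.dirac (θv n j)) ≤
          C * sSup {r : ℝ | ∃ J K : Finset (Fin N), J ∈ treeVerts s S ∧ J ≠ Finset.univ ∧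
            IsParent s S K J ∧ r = eps (v J) n * eps (sDiam s K) n} :=
  stmt_19_general N π θv hp1 hp2 S eps heps0 hmono s hsle hsymm hdiag hultra v hvle hs_asymp
    hv_asymp
end
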